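/- arXiv:2303.08267 — 3 statements merged into one kernel-verified Lean document; each statement's English description precedes it below -/
import Mathlib

section
/- With R and s as above (s a k-algebra involution of R = Sym(V*)), the invariant subring R^s = {f ∈ R : s(f) = f} satisfies: for δ ∈ V* with ⟨δ, α^∨⟩ = 1, every f ∈ R decomposes uniquely as f = a + bδ with a, b ∈ R^s; equivalently, R is a free R^s-module of rank 2 with basis {1, δ}. -/
open MvPolynomial

/-- `R = Sym(V*) = k[x_1,…,x_n]` is free of rank 2 over the invariants of a reflection.
With `α = Σ_i a_i x_i`, `α^∨` with coordinates `(c_i)`, `⟨α, α^∨⟩ = 2`, `s` the algebra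
involution induced by `f ↦ f − ⟨f, α^∨⟩α` on `V*`, and `δ = Σ_i d_i x_i ∈ V*` with
`⟨δ, α^∨⟩ = Σ d_i c_i = 1`:  every `f ∈ R` decomposes uniquely as `f = a + b·δ` with
`a, b ∈ R^s = {g : s g = g}`. -/
theorem stmt_13 {k : Type*} [Field k] {n : ℕ}
    (a c d : Fin n → k)
    (h2 : ∑ i, a i * c i = 2)
    (hα : (∑ i, C (a i) * X i : MvPolynomial (Fin n) k) ≠ 0)
    (s : MvPolynomial (Fin n) k →ₐ[k] MvPolynomial (Fin n) k)
    (hsX : ∀ i, s (X i) = X i - C (c i) * ∑ j, C (a j) * X j)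
    (hinvol : ∀ f, s (s f) = f)
    (hδ : ∑ i, d i * c i = 1) :
    ∀ f : MvPolynomial (Fin n) k,
      ∃! p : MvPolynomial (Fin n) k × MvPolynomial (Fin n) k,
        s p.1 = p.1 ∧ s p.2 = p.2 ∧ f = p.1 + p.2 * ∑ i, C (d i) * X i := by
  set α : MvPolynomial (Fin n) k := ∑ i, C (a i) * X i with hαdef
  set δp : MvPolynomial (Fin n) k := ∑ i, C (d i) * X i with hδdef
  have hsC : ∀ x : k, s (C x) = C x := by
    intro x
    rw [← MvPolynomial.algebraMap_eq]
    exact s.commutes x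
  have hsα : s α = -α := by
    rw [hαdef, map_sum]
    have : ∀ i, s (C (a i) * X i) = C (a i) * X i - C (a i * c i) * α := by
      intro i
      rw [map_mul, hsC, hsX, C_mul]
      ring
    rw [Finset.sum_congr rfl fun i _ => this i, Finset.sum_sub_distrib, ← Finset.sum_mul,
      ← map_sum, h2, ← hαdef, show ((C 2 : MvPolynomial (Fin n) k)) = 2 from map_ofNat _ 2]
    ring
  have hsδ : s δp = δp - α := by
    rw [hδdef, map_sum]
    have : ∀ i, s (C (d i) * X i) = C (d i) * X i - C (d i * c i) * α := by
      intro i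
      rw [map_mul, hsC, hsX, C_mul]
      ring
    rw [Finset.sum_congr rfl fun i _ => this i, Finset.sum_sub_distrib, ← Finset.sum_mul,
      ← map_sum, hδ, ← hδdef]
    simp
  have hdvd : ∀ f : MvPolynomial (Fin n) k, ∃ q, f - s f = α * q := by
    intro f
    induction f using MvPolynomial.induction_on with
    | C x => exact ⟨0, by rw [hsC]; ring⟩
    | add p q hp hq =>
      obtain ⟨qp, hqp⟩ := hp
      obtain ⟨qq, hqq⟩ := hq
      exact ⟨qp + qq, by rw [map_add]; linear_combination hqp + hqq⟩
    | mul_X p i hp =>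
      obtain ⟨q, hq⟩ := hp
      refine ⟨q * X i + C (c i) * s p, ?_⟩
      rw [map_mul, hsX i]
      linear_combination X i * hq
  intro f
  obtain ⟨b, hb⟩ := hdvd f
  have hsb : s b = b := by
    have h1 : s (α * b) = s f - f := by rw [← hb, map_sub, hinvol]
    rw [map_mul, hsα] at h1
    have h2' : α * s b = α * b := by linear_combination -h1 + hb
    exact (mul_left_cancel₀ hα h2')
  have hsA : s (f - b * δp) = f - b * δp := by
    rw [map_sub, map_mul, hsb, hsδ]
    linear_combination -hb
  refine ⟨(f - b * δp, b), ⟨hsA, hsb, by ring⟩, ?_⟩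
  rintro ⟨a', b'⟩ ⟨ha', hb', heq⟩
  simp only at ha' hb' heq ⊢
  have hsf : s f = a' + b' * (δp - α) := by
    rw [heq, map_add, map_mul, ha', hb', hsδ]
  have hbb : α * b' = α * b := by linear_combination -heq + hsf + hb
  have hb'b : b' = b := mul_left_cancel₀ hα hbb
  subst hb'b
  have : a' = f - b' * δp := by linear_combination -heq
  rw [Prod.ext_iff]
  exact ⟨this, rfl⟩
end

section
/- Let R = Sym(V*), s a reflection as above, B_s = R ⊗_{R^s} R, and let Q be a localization of R in which α_s is invertible. Set e_1 := (δ_s ⊗ 1 − 1 ⊗ s(δ_s)) and e_2 := (δ_s ⊗ 1 − 1 ⊗ δ_s) in B_s ⊗_R Q. Then B_s ⊗_R Q = Q·e_1 ⊕ Q·e_2 as right Q-modules; moreover for every f ∈ R one has f · e_1 = e_1 · f and f · e_2 = e_2 · s(f) (left action of R versus twisted right action). -/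
open MvPolynomial TensorProduct

section Aux
variable {k : Type*} [Field k] {n : ℕ} (a c : Fin n → k)
  (s : MvPolynomial (Fin n) k →ₐ[k] MvPolynomial (Fin n) k)
  (hsX : ∀ i, s (X i) = X i - C (c i) * ∑ j, C (a j) * X j)

include hsX

theorem stmt15_s_lin (d : Fin n → k) :
    s (∑ i, C (d i) * X i) =
      (∑ i, C (d i) * X i) - C (∑ i, d i * c i) * ∑ j, C (a j) * X j := by
  rw [map_sum]
  simp only [map_mul, hsX, algHom_C, MvPolynomial.algebraMap_eq]
  rw [map_sum, Finset.sum_mul, ← Finset.sum_sub_distrib]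
  congr 1; ext i
  rw [map_mul]; ring

theorem stmt15_dvd (f : MvPolynomial (Fin n) k) :
    (∑ j, C (a j) * X j) ∣ f - s f := by
  induction f using MvPolynomial.induction_on with
  | C r => simp
  | add p q hp hq =>
      have : p + q - s (p + q) = (p - s p) + (q - s q) := by rw [map_add]; ring
      rw [this]; exact dvd_add hp hq
  | mul_X p i hp =>
      have : p * X i - s (p * X i) =
          (p - s p) * X i + s p * C (c i) * (∑ j, C (a j) * X j) := by
        rw [map_mul, hsX]; ring
      rw [this]
      exact dvd_add (hp.mul_right _) (Dvd.intro_left _ rfl)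

end Aux

set_option maxHeartbeats 2000000
set_option synthInstance.maxHeartbeats 1000000

/-- Localized decomposition of the Soergel bimodule `B_s`.  Here `R = Sym(V*) =
k[x_1,…,x_n]`, `s` is the reflection with root `α_s = Σ a_i x_i` and coroot of
coordinates `(c_i)` (`⟨α_s, α_s^∨⟩ = 2`), `δ_s = Σ d_i x_i` satisfies `⟨δ_s, α_s^∨⟩ = 1`,
`R^s` is the invariant subalgebra, and `Q = R[α_s⁻¹]`.  The bimodule
`B_s ⊗_R Q = R ⊗_{R^s} Q` is modelled (with factors flipped) as `Q ⊗_{R^s} R`, with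
right `Q`-action the evident `Q`-module structure and left `R`-action
`f · (q ⊗ x) = q ⊗ fx`.  Setting `e₁ = δ_s ⊗ 1 − 1 ⊗ s(δ_s)` and
`e₂ = δ_s ⊗ 1 − 1 ⊗ δ_s`, one has `B_s ⊗_R Q = Q·e₁ ⊕ Q·e₂` as right `Q`-modules, and
`f·e₁ = e₁·f`, `f·e₂ = e₂·s(f)` for all `f ∈ R`. -/
theorem stmt_15 {k : Type*} [Field k] {n : ℕ}
    (a c d : Fin n → k)
    (h2 : ∑ i, a i * c i = 2)
    (hα : (∑ i, C (a i) * X i : MvPolynomial (Fin n) k) ≠ 0)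
    (s : MvPolynomial (Fin n) k →ₐ[k] MvPolynomial (Fin n) k)
    (hsX : ∀ i, s (X i) = X i - C (c i) * ∑ j, C (a j) * X j)
    (hinvol : ∀ f, s (s f) = f)
    (hδ : ∑ i, d i * c i = 1) :
    let R := MvPolynomial (Fin n) k
    let α : R := ∑ i, C (a i) * X i
    let δ : R := ∑ i, C (d i) * X i
    let Rs := AlgHom.equalizer s (AlgHom.id k R)
    let Q := Localization.Away α
    letI : Algebra ↥Rs Q := ((algebraMap R Q).comp (algebraMap ↥Rs R)).toAlgebra
    let e₁ : Q ⊗[Rs] R := (1 : Q) ⊗ₜ[Rs] δ - (algebraMap R Q (s δ)) ⊗ₜ[Rs] (1 : R)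
    let e₂ : Q ⊗[Rs] R := (1 : Q) ⊗ₜ[Rs] δ - (algebraMap R Q δ) ⊗ₜ[Rs] (1 : R)
    Function.Bijective (fun p : Q × Q => p.1 • e₁ + p.2 • e₂) ∧
    (∀ f : R, LinearMap.lTensor Q (LinearMap.mulLeft Rs f) e₁ = algebraMap R Q f • e₁) ∧
    (∀ f : R, LinearMap.lTensor Q (LinearMap.mulLeft Rs f) e₂ = algebraMap R Q (s f) • e₂) := by
  intro R α δ Rs Q e₁ e₂
  -- basic facts about s, α, δ
  have hsα : s α = -α := by
    have := stmt15_s_lin a c s hsX a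
    rw [show s α = s (∑ i, C (a i) * X i) from rfl, this, h2]
    show α - C 2 * α = -α
    rw [map_ofNat]; ring
  have hsδ : s δ = δ - α := by
    have := stmt15_s_lin a c s hsX d
    rw [show s δ = s (∑ i, C (d i) * X i) from rfl, this, hδ, map_one, one_mul]
  -- Demazure operator
  choose D hD using fun f => stmt15_dvd a c s hsX f
  have hD' : ∀ f : R, f - s f = α * D f := hD
  have hsD : ∀ f : R, s (D f) = D f := by
    intro f
    have h1 : s (f - s f) = s α * s (D f) := by rw [hD' f, map_mul]
    rw [map_sub, hinvol, hsα, neg_mul] at h1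
    have h2' : α * D f = α * s (D f) := by
      have : -(f - s f) = -(α * s (D f)) := by rw [← h1]; ring
      rw [neg_inj] at this
      rw [← hD' f, this]
    exact (mul_left_cancel₀ hα h2').symm
  have hsg : ∀ f : R, s (f - D f * δ) = f - D f * δ := by
    intro f
    rw [map_sub, map_mul, hsD, hsδ]
    have := hD' f
    ring_nf
    linear_combination -hD' f
  -- membership of Demazure components in the invariants
  have hgmem : ∀ f : R, f - D f * δ ∈ Rs := fun f =>
    (AlgHom.mem_equalizer s (AlgHom.id k R) _).mpr (hsg f)
  have hDmem : ∀ f : R, D f ∈ Rs := fun f =>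
    (AlgHom.mem_equalizer s (AlgHom.id k R) _).mpr (hsD f)
  -- the basis {1, δ} of R over Rs
  have hli : LinearIndependent Rs ![(1 : R), δ] := by
    rw [LinearIndependent.pair_iff]
    intro r t hrt
    have hrt' : (r : R) + (t : R) * δ = 0 := by
      simpa [Subalgebra.smul_def, smul_eq_mul] using hrt
    have hr : s (r : R) = (r : R) := r.2
    have ht : s (t : R) = (t : R) := t.2
    have hs' : (r : R) + (t : R) * (δ - α) = 0 := by
      have := congrArg s hrt'
      simpa [map_add, map_mul, hr, ht, hsδ] using this
    have htα : (t : R) * α = 0 := by linear_combination hrt' - hs'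
    have ht0 : (t : R) = 0 := by
      rcases mul_eq_zero.mp htα with h | h
      · exact h
      · exact absurd h hα
    have hr0 : (r : R) = 0 := by rw [ht0, zero_mul, add_zero] at hrt'; exact hrt'
    exact ⟨Subtype.ext hr0, Subtype.ext ht0⟩
  have hspan : ⊤ ≤ Submodule.span Rs (Set.range ![(1 : R), δ]) := by
    intro f _
    rw [Submodule.mem_span_range_iff_exists_fun]
    refine ⟨![⟨f - D f * δ, hgmem f⟩, ⟨D f, hDmem f⟩], ?_⟩
    rw [Fin.sum_univ_two]
    simp only [Matrix.cons_val_zero, Matrix.cons_val_one, Matrix.head_cons,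
      Subalgebra.smul_def, smul_eq_mul]
    show (f - D f * δ) * 1 + D f * δ = f
    ring
  let b : Module.Basis (Fin 2) Rs R := Module.Basis.mk hli hspan
  let bQ : Module.Basis (Fin 2) Q (Q ⊗[Rs] R) := b.baseChange Q
  have hb0 : bQ 0 = (1 : Q) ⊗ₜ[Rs] (1 : R) := by
    show (b.baseChange Q) 0 = _
    rw [Module.Basis.baseChange_apply, Module.Basis.mk_apply]
    simp
  have hb1 : bQ 1 = (1 : Q) ⊗ₜ[Rs] δ := by
    show (b.baseChange Q) 1 = _
    rw [Module.Basis.baseChange_apply, Module.Basis.mk_apply]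
    simp
  set u : Q ⊗[Rs] R := (1 : Q) ⊗ₜ[Rs] (1 : R) with hu
  set v : Q ⊗[Rs] R := (1 : Q) ⊗ₜ[Rs] δ with hv
  set αQ : Q := algebraMap R Q α with hαQ
  set δQ : Q := algebraMap R Q δ with hδQ
  set sδQ : Q := algebraMap R Q (s δ) with hsδQ
  have hsδQ' : sδQ = δQ - αQ := by rw [hsδQ, hsδ, map_sub]
  have hainv : αQ * IsLocalization.Away.invSelf (S := Q) α = 1 :=
    IsLocalization.Away.mul_invSelf α
  set ainv : Q := IsLocalization.Away.invSelf (S := Q) α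
  -- instance-specialized smul lemmas (rw/simp fail to unify instances otherwise)
  have Ssub : ∀ (q : Q) (x y : Q ⊗[Rs] R), q • (x - y) = q • x - q • y :=
    fun q x y => smul_sub q x y
  have Sadd : ∀ (q : Q) (x y : Q ⊗[Rs] R), q • (x + y) = q • x + q • y :=
    fun q x y => smul_add q x y
  have Smul : ∀ (q r : Q) (x : Q ⊗[Rs] R), q • r • x = (q * r) • x :=
    fun q r x => smul_smul q r x
  have Aadd : ∀ (q r : Q) (x : Q ⊗[Rs] R), (q + r) • x = q • x + r • x :=
    fun q r x => add_smul q r x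
  have Asub : ∀ (q r : Q) (x : Q ⊗[Rs] R), (q - r) • x = q • x - r • x :=
    fun q r x => sub_smul q r x
  have Aneg : ∀ (q : Q) (x : Q ⊗[Rs] R), (-q) • x = -(q • x) :=
    fun q x => neg_smul q x
  -- rewrite e₁, e₂ via u, v
  have he₁ : e₁ = v - sδQ • u := by
    show (1 : Q) ⊗ₜ[Rs] δ - sδQ ⊗ₜ[Rs] (1 : R) = v - sδQ • u
    rw [hu, TensorProduct.smul_tmul', smul_eq_mul, mul_one]
  have he₂ : e₂ = v - δQ • u := by
    show (1 : Q) ⊗ₜ[Rs] δ - δQ ⊗ₜ[Rs] (1 : R) = v - δQ • u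
    rw [hu, TensorProduct.smul_tmul', smul_eq_mul, mul_one]
  -- Part 1 : bijectivity
  have part1 : Function.Bijective (fun p : Q × Q => p.1 • e₁ + p.2 • e₂) := by
    have hG : Function.Bijective (fun p : Q × Q =>
        ((-(sδQ * p.1 + δQ * p.2), p.1 + p.2) : Q × Q)) := by
      rw [Function.bijective_iff_has_inverse]
      refine ⟨fun w => (ainv * (w.1 + δQ * w.2), w.2 - ainv * (w.1 + δQ * w.2)), ?_, ?_⟩
      · rintro ⟨p, q⟩
        have h1 : ainv * (-(sδQ * p + δQ * q) + δQ * (p + q)) = p := by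
          rw [hsδQ']
          linear_combination p * hainv
        refine Prod.ext h1 ?_
        show p + q - ainv * (-(sδQ * p + δQ * q) + δQ * (p + q)) = q
        rw [h1]; ring
      · rintro ⟨x, y⟩
        have h1 : -(sδQ * (ainv * (x + δQ * y)) + δQ * (y - ainv * (x + δQ * y))) = x := by
          rw [hsδQ']
          linear_combination (x + δQ * y) * hainv
        refine Prod.ext h1 ?_
        show ainv * (x + δQ * y) + (y - ainv * (x + δQ * y)) = y
        ring
    have hF : (fun p : Q × Q => p.1 • e₁ + p.2 • e₂)
        = (⇑bQ.equivFun.symm ∘ ⇑(finTwoArrowEquiv Q).symm) ∘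
          (fun p : Q × Q => ((-(sδQ * p.1 + δQ * p.2), p.1 + p.2) : Q × Q)) := by
      funext p
      simp only [Function.comp_apply, finTwoArrowEquiv_symm_apply,
        Module.Basis.equivFun_symm_apply, Fin.sum_univ_two, Matrix.cons_val_zero,
        Matrix.cons_val_one, Matrix.head_cons, hb0, hb1, he₁, he₂, ← hu, ← hv]
      simp only [neg_add, Aadd, Aneg, Ssub, Smul]
      rw [mul_comm sδQ p.1, mul_comm δQ p.2]
      abel
    rw [hF]
    exact (bQ.equivFun.symm.bijective.comp (finTwoArrowEquiv Q).symm.bijective).comp hG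
  -- moving invariant elements across the tensor
  have move : ∀ (r : Rs) (y : R), (1 : Q) ⊗ₜ[Rs] ((r : R) * y)
      = algebraMap R Q (r : R) • ((1 : Q) ⊗ₜ[Rs] y) := by
    intro r y
    have h1 : (r : R) * y = r • y := by rw [Subalgebra.smul_def, smul_eq_mul]
    have h2 : r • (1 : Q) = algebraMap R Q (r : R) := by
      rw [Subalgebra.smul_def]
      exact (Algebra.algebraMap_eq_smul_one (R := R) (A := Q) (r : R)).symm
    have h3 : algebraMap R Q (r : R) • ((1 : Q) ⊗ₜ[Rs] y) = algebraMap R Q (r : R) ⊗ₜ[Rs] y := by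
      rw [TensorProduct.smul_tmul', smul_eq_mul, mul_one]
    rw [h1, ← TensorProduct.smul_tmul, h2, h3]
  -- the decomposition lemma
  have dec : ∀ f : R, (1 : Q) ⊗ₜ[Rs] f
      = algebraMap R Q f • u + algebraMap R Q (D f) • e₂ := by
    intro f
    have h0 : (1 : Q) ⊗ₜ[Rs] f
        = (1 : Q) ⊗ₜ[Rs] (((⟨f - D f * δ, hgmem f⟩ : Rs) : R) * 1)
          + (1 : Q) ⊗ₜ[Rs] (((⟨D f, hDmem f⟩ : Rs) : R) * δ) := by
      rw [← TensorProduct.tmul_add]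
      congr 1
      show f = (f - D f * δ) * 1 + D f * δ
      ring
    rw [h0, move, move, he₂, hu, hv]
    have hmap : algebraMap R Q ((⟨f - D f * δ, hgmem f⟩ : Rs) : R)
        = algebraMap R Q f - algebraMap R Q (D f) * δQ := by
      show algebraMap R Q (f - D f * δ) = _
      rw [map_sub, map_mul, hδQ]
    rw [hmap]
    show (algebraMap R Q f - algebraMap R Q (D f) * δQ) • ((1:Q) ⊗ₜ[Rs] (1:R))
        + algebraMap R Q (D f) • ((1:Q) ⊗ₜ[Rs] δ)
      = algebraMap R Q f • ((1:Q) ⊗ₜ[Rs] (1:R))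
        + algebraMap R Q (D f) • ((1:Q) ⊗ₜ[Rs] δ - δQ • ((1:Q) ⊗ₜ[Rs] (1:R)))
    simp only [Asub, Ssub, Smul]
    abel
  -- Part 3 : twisted commutation for e₂
  have part3 : ∀ f : R, LinearMap.lTensor Q (LinearMap.mulLeft Rs f) e₂
      = algebraMap R Q (s f) • e₂ := by
    intro f
    have happ : LinearMap.lTensor Q (LinearMap.mulLeft Rs f) e₂
        = (1 : Q) ⊗ₜ[Rs] (f * δ) - δQ ⊗ₜ[Rs] f := by
      show LinearMap.lTensor Q (LinearMap.mulLeft Rs f)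
          ((1 : Q) ⊗ₜ[Rs] δ - δQ ⊗ₜ[Rs] (1 : R)) = _
      rw [map_sub, LinearMap.lTensor_tmul, LinearMap.lTensor_tmul]
      simp [LinearMap.mulLeft_apply]
    have hδf : δQ ⊗ₜ[Rs] f = δQ • ((1 : Q) ⊗ₜ[Rs] f) := by
      rw [TensorProduct.smul_tmul', smul_eq_mul, mul_one]
    have hkey : D (f * δ) = δ * D f + s f := by
      have h3 : α * D (f * δ) = α * (δ * D f + s f) := by
        have e3 : s (f * δ) = s f * (δ - α) := by rw [map_mul, hsδ]
        linear_combination -hD' (f * δ) + δ * hD' f - e3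
      exact mul_left_cancel₀ hα h3
    rw [happ, hδf, dec f, dec (f * δ), hkey]
    rw [map_mul, map_add, map_mul, hδQ]
    simp only [Aadd, Sadd, Smul]
    rw [mul_comm (algebraMap R Q f) δQ]
    abel
  refine ⟨part1, ?_, part3⟩
  -- Part 2 : commutation for e₁
  intro f
  have he12 : e₁ = e₂ + αQ • u := by
    rw [he₁, he₂, hsδQ']
    rw [Asub]
    abel
  have happα : LinearMap.lTensor Q (LinearMap.mulLeft Rs f) (αQ • u)
      = αQ • ((1 : Q) ⊗ₜ[Rs] f) := by
    have h1 : αQ • u = αQ ⊗ₜ[Rs] (1 : R) := by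
      rw [hu, TensorProduct.smul_tmul', smul_eq_mul, mul_one]
    rw [h1, LinearMap.lTensor_tmul]
    simp only [LinearMap.mulLeft_apply, mul_one]
    rw [TensorProduct.smul_tmul', smul_eq_mul, mul_one]
  rw [he12, map_add, part3 f, happα, dec f]
  have hsf : algebraMap R Q (s f) = algebraMap R Q f - αQ * algebraMap R Q (D f) := by
    rw [hαQ, ← map_mul, ← map_sub]
    congr 1
    linear_combination -hD' f
  rw [hsf]
  simp only [Asub, Sadd, Smul]
  rw [mul_comm αQ (algebraMap R Q f)]
  abel
end

section
/- Let (W,S) be a Coxeter system and s,t ∈ S distinct with m := m_{s,t} < ∞. Let w(s,t) denote the alternating word (s,t,s,…) of length m. Then in the Hecke algebra, writing \underline{H}_{w(s,t)} = Σ_x p^x(v) H_x, the polynomial p^e(v) (coefficient of the identity) has v^m-coefficient equal to 1, i.e. the monomial v^{ℓ(w(s,t))} appears in p^e_{w(s,t)}(v) with coefficient exactly 1. -/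
/-- The element `v` of `ℤ[v,v⁻¹]`. -/
noncomputable def Hecke.v : LaurentPolynomial ℤ := LaurentPolynomial.T 1

/-- The element `v⁻¹` of `ℤ[v,v⁻¹]`. -/
noncomputable def Hecke.vinv : LaurentPolynomial ℤ := LaurentPolynomial.T (-1)

/-- The coefficient of `v^n` in a Laurent polynomial. -/
noncomputable def Hecke.lcoeff (p : LaurentPolynomial ℤ) (n : ℤ) : ℤ := (AddMonoidAlgebra.coeff p : ℤ →₀ ℤ) n

/-- `\underline{H}_{\underline{w}} = \underline{H}_{s_1} ⋯ \underline{H}_{s_n}` for an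
expression `\underline{w} = (s_1, …, s_n)`, where `\underline{H}_s = H_s + v`. -/
noncomputable def Hecke.underlineProd {B W H : Type*} [Group W] {M : CoxeterMatrix B}
    (cs : CoxeterSystem M W) [Ring H] [Algebra (LaurentPolynomial ℤ) H]
    (Hb : Module.Basis W (LaurentPolynomial ℤ) H) (l : List B) : H :=
  (l.map (fun i => Hb (cs.simple i) + Hecke.v • 1)).prod

/-- The alternating word `(s, t, s, …)` of length `n`. -/
def altWord {B : Type*} : ℕ → B → B → List B
  | 0, _, _ => []
  | n + 1, s, t => s :: altWord n t s

open Hecke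

namespace Stmt16Aux

open LaurentPolynomial
open scoped Classical

lemma lcoeff_add (p q : LaurentPolynomial ℤ) (n : ℤ) :
    lcoeff (p + q) n = lcoeff p n + lcoeff q n := by
  unfold lcoeff; rw [AddMonoidAlgebra.coeff_add, Finsupp.add_apply]

lemma lcoeff_sub (p q : LaurentPolynomial ℤ) (n : ℤ) :
    lcoeff (p - q) n = lcoeff p n - lcoeff q n := by
  unfold lcoeff; rw [AddMonoidAlgebra.coeff_sub, Finsupp.sub_apply]

lemma lcoeff_zero (n : ℤ) : lcoeff 0 n = 0 := by
  unfold lcoeff; rw [AddMonoidAlgebra.coeff_zero, Finsupp.zero_apply]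

lemma lcoeff_T_mul (a : ℤ) (p : LaurentPolynomial ℤ) (n : ℤ) :
    lcoeff (T a * p) n = lcoeff p (n - a) := by
  show AddMonoidAlgebra.coeff (AddMonoidAlgebra.single a (1 : ℤ) * p : AddMonoidAlgebra ℤ ℤ) n = _
  rw [AddMonoidAlgebra.coeff_single_mul_apply, one_mul]
  show AddMonoidAlgebra.coeff p (-a + n) = AddMonoidAlgebra.coeff p (n - a)
  congr 1; ring

lemma lcoeff_one (n : ℤ) : lcoeff 1 n = if n = 0 then 1 else 0 := by
  show AddMonoidAlgebra.coeff (AddMonoidAlgebra.single (0 : ℤ) (1 : ℤ) : AddMonoidAlgebra ℤ ℤ) n = _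
  rw [AddMonoidAlgebra.coeff_single_apply]
  simp [eq_comm]

variable {B W H : Type*} [Group W] {M : CoxeterMatrix B} (cs : CoxeterSystem M W)
    [Ring H] [Algebra (LaurentPolynomial ℤ) H] (Hb : Module.Basis W (LaurentPolynomial ℤ) H)

lemma repr_simple_mul
    (hmul_gt : ∀ (i : B) (w : W), cs.length w < cs.length (cs.simple i * w) →
      Hb (cs.simple i) * Hb w = Hb (cs.simple i * w))
    (hmul_lt : ∀ (i : B) (w : W), cs.length (cs.simple i * w) < cs.length w →
      Hb (cs.simple i) * Hb w = Hb (cs.simple i * w) + (vinv - v) • Hb w)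
    (a : B) (y : W) (h : H) :
    Hb.repr (Hb (cs.simple a) * h) y =
      Hb.repr h (cs.simple a * y) +
        (if cs.length (cs.simple a * y) < cs.length y
          then (vinv - v) * Hb.repr h y else 0) := by
  have key : (Finsupp.lapply y ∘ₗ (Hb.repr.toLinearMap ∘ₗ
        LinearMap.mulLeft (LaurentPolynomial ℤ) (Hb (cs.simple a))))
      = (Finsupp.lapply (cs.simple a * y) ∘ₗ Hb.repr.toLinearMap)
        + (if cs.length (cs.simple a * y) < cs.length y
            then (vinv - v) • (Finsupp.lapply y ∘ₗ Hb.repr.toLinearMap) else 0) := by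
    apply Hb.ext
    intro w
    have hne : ∀ z : W, cs.simple a * z ≠ z := fun z hz =>
      cs.length_simple_mul_ne z a (by rw [hz])
    have hiff : (cs.simple a * w = y) ↔ (w = cs.simple a * y) := by
      constructor
      · rintro rfl; rw [cs.simple_mul_simple_cancel_left]
      · rintro rfl; rw [cs.simple_mul_simple_cancel_left]
    simp only [LinearMap.comp_apply, LinearMap.mulLeft_apply, LinearMap.add_apply,
      Finsupp.lapply_apply, LinearEquiv.coe_toLinearMap, apply_ite (fun f : H →ₗ[LaurentPolynomial ℤ] LaurentPolynomial ℤ => f (Hb w)),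
      LinearMap.smul_apply, LinearMap.zero_apply, smul_eq_mul]
    rcases cs.length_simple_mul w a with hlen | hlen
    · rw [hmul_gt a w (by omega), Module.Basis.repr_self, Module.Basis.repr_self]
      simp only [Finsupp.single_apply, hiff]
      by_cases hw : w = y
      · subst hw
        rw [if_neg (show ¬ cs.length (cs.simple a * w) < cs.length w by omega), add_zero]
      · rw [if_neg hw, mul_zero, ite_self, add_zero]
    · have hlt : cs.length (cs.simple a * w) < cs.length w := by
        have := cs.length_simple_mul_ne w a; omega
      rw [hmul_lt a w hlt, map_add, map_smul, Module.Basis.repr_self, Module.Basis.repr_self,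
        Finsupp.add_apply, Finsupp.smul_apply, smul_eq_mul]
      simp only [Finsupp.single_apply, hiff]
      by_cases hw : w = y
      · subst hw
        rw [if_pos hlt]
      · rw [if_neg hw, mul_zero, add_zero, ite_self, add_zero]
  have := DFunLike.congr_fun key h
  simpa only [LinearMap.comp_apply, LinearMap.mulLeft_apply, LinearMap.add_apply,
    Finsupp.lapply_apply, LinearEquiv.coe_toLinearMap,
    apply_ite (fun f : H →ₗ[LaurentPolynomial ℤ] LaurentPolynomial ℤ => f h),
    LinearMap.smul_apply, LinearMap.zero_apply, smul_eq_mul] using this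

lemma keyD
    (hone : Hb 1 = 1)
    (hmul_gt : ∀ (i : B) (w : W), cs.length w < cs.length (cs.simple i * w) →
      Hb (cs.simple i) * Hb w = Hb (cs.simple i * w))
    (hmul_lt : ∀ (i : B) (w : W), cs.length (cs.simple i * w) < cs.length w →
      Hb (cs.simple i) * Hb w = Hb (cs.simple i * w) + (vinv - v) • Hb w)
    (l : List B) :
    ∀ (y : W) (n : ℤ), (l.length : ℤ) ≤ n →
      lcoeff (Hb.repr (underlineProd cs Hb l) y) n =
        if y = 1 ∧ n = (l.length : ℤ) then 1 else 0 := by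
  induction l with
  | nil =>
    intro y n hn
    have hU : underlineProd cs Hb ([] : List B) = 1 := by
      unfold Hecke.underlineProd; simp
    rw [hU, ← hone, Module.Basis.repr_self, Finsupp.single_apply]
    simp only [List.length_nil, Nat.cast_zero]
    by_cases hy : y = 1
    · subst hy
      rw [if_pos rfl, lcoeff_one]
      simp
    · rw [if_neg (fun h => hy h.symm), lcoeff_zero, if_neg (fun h => hy h.1)]
  | cons a l ih =>
    intro y n hn
    have hn' : (l.length : ℤ) + 1 ≤ n := by
      push_cast [List.length_cons] at hn; omega
    have hU : underlineProd cs Hb (a :: l) =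
        Hb (cs.simple a) * underlineProd cs Hb l + v • underlineProd cs Hb l := by
      unfold Hecke.underlineProd
      rw [List.map_cons, List.prod_cons, add_mul, smul_mul_assoc, one_mul]
    set q := (Hb.repr (underlineProd cs Hb l)) y with hq
    rw [hU, map_add, map_smul, Finsupp.add_apply, Finsupp.smul_apply, smul_eq_mul,
      lcoeff_add, repr_simple_mul cs Hb hmul_gt hmul_lt, lcoeff_add]
    have h1 := ih (cs.simple a * y) n (by omega)
    have h2 := ih y (n + 1) (by omega)
    have h3 := ih y (n - 1) (by omega)
    have e1 : lcoeff (Hecke.v * q) n = lcoeff q (n - 1) := lcoeff_T_mul 1 q n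
    have e2 : lcoeff ((vinv - Hecke.v) * q) n = lcoeff q (n + 1) - lcoeff q (n - 1) := by
      rw [sub_mul, lcoeff_sub, show vinv = T (-1) from rfl, show Hecke.v = T 1 from rfl,
        lcoeff_T_mul, lcoeff_T_mul, show n - -1 = n + 1 by ring]
    rw [apply_ite (fun p => lcoeff p n), lcoeff_zero, e1, e2, h1, h2, h3,
      if_neg (show ¬(cs.simple a * y = 1 ∧ n = (l.length : ℤ)) from fun hh => by omega),
      if_neg (show ¬(y = 1 ∧ n + 1 = (l.length : ℤ)) from fun hh => by omega), zero_sub,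
      zero_add]
    by_cases hcond : cs.length (cs.simple a * y) < cs.length y
    · have hy : y ≠ 1 := by
        rintro rfl
        rw [cs.length_one] at hcond
        omega
      rw [if_pos hcond]
      simp [hy]
    · rw [if_neg hcond, zero_add]
      refine if_congr ?_ rfl rfl
      push_cast [List.length_cons]
      constructor
      · rintro ⟨rfl, hh⟩; exact ⟨rfl, by omega⟩
      · rintro ⟨rfl, hh⟩; exact ⟨rfl, by omega⟩

lemma altWord_length {B : Type*} (n : ℕ) (s t : B) : (altWord n s t).length = n := by
  induction n generalizing s t with
  | zero => rfl
  | succ n ih => simp [altWord, ih]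

end Stmt16Aux

/-- Let `s, t ∈ S` be distinct with `m := m_{s,t} < ∞`, and let `w(s,t)` be the
alternating word `(s,t,s,…)` of length `m`.  Writing
`\underline{H}_{w(s,t)} = Σ_x p^x(v) H_x` in the Hecke algebra, the coefficient of `v^m`
in `p^e(v)` equals `1`. -/
theorem stmt_16 {B W H : Type*} [Group W] {M : CoxeterMatrix B} (cs : CoxeterSystem M W)
    [Ring H] [Algebra (LaurentPolynomial ℤ) H]
    (Hb : Module.Basis W (LaurentPolynomial ℤ) H)
    (hone : Hb 1 = 1)
    (hmul_gt : ∀ (i : B) (w : W), cs.length w < cs.length (cs.simple i * w) →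
      Hb (cs.simple i) * Hb w = Hb (cs.simple i * w))
    (hmul_lt : ∀ (i : B) (w : W), cs.length (cs.simple i * w) < cs.length w →
      Hb (cs.simple i) * Hb w = Hb (cs.simple i * w) + (vinv - v) • Hb w)
    (i j : B) (hij : i ≠ j) (hfin : M.M i j ≠ 0) :
    lcoeff (Hb.repr (underlineProd cs Hb (altWord (M.M i j) i j)) 1) (M.M i j : ℤ) = 1 := by
  have h := Stmt16Aux.keyD cs Hb hone hmul_gt hmul_lt (altWord (M.M i j) i j) 1 (M.M i j : ℤ)
    (by rw [Stmt16Aux.altWord_length])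
  rw [h, Stmt16Aux.altWord_length, if_pos ⟨rfl, rfl⟩]
end
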